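/- Let θ(z) = tanh(√2 z) and f(u) = (u^2-1)^2. If q ∈ H^1(-1/ε,1/ε) satisfies -(q - αθ')'' + f''(θ)(q - αθ') = λ₁ q on (-1/ε,1/ε) with (q - αθ')'(±1/ε) = -αθ''(±1/ε), ‖q‖_{L²} = 1, |λ₁| ≤ Ce^{-c/ε}, ‖q - αθ'‖_{L²}² ≤ Ce^{-c/ε}, and α = 1/‖θ'‖_{L²}, then ∫_{-1/ε}^{1/ε} |(q - αθ')'|² dz ≤ C' e^{-c'/ε} for some constants c', C' > 0. -/

import Mathlib

/-!
Put `W = q - α θ'`, so that `W'' = f''(θ) W - λ₁ q`. Multiplying by `W` and integrating by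
parts, `∫ W'² = [W W'] - ∫ f''(θ) W² + λ₁ ∫ q W`. Since `|f''(θ)| ≤ 8`, the bulk terms are
`O(‖W‖² + λ₁²)`. At the endpoints `W' = -α θ''` is `O(e^{-2/ε})`, because `θ''` decays
exponentially and `α` is bounded (`‖θ'‖` is bounded below on `[-1, 1]`), while `W(±1/ε)²` is
controlled by the one-dimensional trace inequality `W(x)² ≤ 2 ‖W‖² + ‖W'‖²`; the resulting
multiple of `‖W'‖²` is absorbed into the left-hand side.
-/

open Real Set MeasureTheory

section EnergyEstimate

variable {W : ℝ → ℝ} {a b : ℝ}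

theorem integral_deriv_sq_eq (hW : ContDiff ℝ 2 W) :
    ∫ x in a..b, deriv W x ^ 2 =
      W b * deriv W b - W a * deriv W a - ∫ x in a..b, W x * deriv (deriv W) x := by
  have hW' : ContDiff ℝ 1 (deriv W) := (hW : ContDiff ℝ (1 + 1) W).deriv'
  rw [intervalIntegral.integral_mul_deriv_eq_deriv_mul
    (fun x _ => (hW.differentiable two_ne_zero x).hasDerivAt)
    (fun x _ => (hW'.differentiable one_ne_zero x).hasDerivAt)
    (hW'.continuous.intervalIntegrable _ _) ((hW'.continuous_deriv le_rfl).intervalIntegrable _ _)]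
  simp only [sq, sub_sub_cancel]

theorem exists_mem_Icc_mul_le_integral {g : ℝ → ℝ} (hg : Continuous g) (hab : a ≤ b) :
    ∃ x₀ ∈ Icc a b, (b - a) * g x₀ ≤ ∫ x in a..b, g x := by
  obtain ⟨x₀, hx₀, hmin⟩ := isCompact_Icc.exists_isMinOn (nonempty_Icc.mpr hab) hg.continuousOn
  refine ⟨x₀, hx₀, ?_⟩
  calc (b - a) * g x₀ = ∫ _ in a..b, g x₀ := by simp
    _ ≤ ∫ x in a..b, g x :=
      intervalIntegral.integral_mono_on hab intervalIntegrable_const (hg.intervalIntegrable _ _)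
        fun x hx => hmin hx

theorem abs_intervalIntegral_le_of_mem_Icc {h : ℝ → ℝ} (hh : Continuous h) {x y : ℝ}
    (hx : x ∈ Icc a b) (hy : y ∈ Icc a b) :
    |∫ t in x..y, h t| ≤ ∫ t in a..b, |h t| := by
  calc |∫ t in x..y, h t| ≤ |(∫ t in x..y, |h t|)| := by
        simpa only [Real.norm_eq_abs] using
          intervalIntegral.norm_integral_le_abs_integral_norm (f := h) (a := x) (b := y)
    _ ≤ |(∫ t in a..b, |h t|)| := intervalIntegral.abs_integral_mono_interval
        (uIoc_subset_uIoc_of_uIcc_subset_uIcc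
          (uIcc_subset_uIcc (Icc_subset_uIcc hx) (Icc_subset_uIcc hy)))
        (ae_of_all _ fun _ => abs_nonneg _) (hh.abs.intervalIntegrable _ _)
    _ = ∫ t in a..b, |h t| :=
        abs_of_nonneg (intervalIntegral.integral_nonneg (hx.1.trans hx.2) fun _ _ => abs_nonneg _)

/-- Compare `W x ^ 2` with its value at a point where `W ^ 2` is below its mean, using
`W x ^ 2 - W x₀ ^ 2 = ∫ 2 W W'` and `|2 W W'| ≤ W ^ 2 + W' ^ 2`. -/
theorem sq_le_two_mul_integral_sq_add_integral_deriv_sq (hW : ContDiff ℝ 1 W) (hab : a + 1 ≤ b)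
    {x : ℝ} (hx : x ∈ Icc a b) :
    W x ^ 2 ≤ 2 * (∫ y in a..b, W y ^ 2) + ∫ y in a..b, deriv W y ^ 2 := by
  have hWc : Continuous W := hW.continuous
  have hW'c : Continuous (deriv W) := hW.continuous_deriv le_rfl
  have hWW' : Continuous fun y => 2 * W y * deriv W y := by fun_prop
  obtain ⟨x₀, hx₀, hx₀le⟩ := exists_mem_Icc_mul_le_integral (a := a) (b := b)
    (g := fun y => W y ^ 2) (by fun_prop) (by linarith)
  have hmin : W x₀ ^ 2 ≤ ∫ y in a..b, W y ^ 2 := by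
    nlinarith [mul_le_mul_of_nonneg_right (by linarith : 1 ≤ b - a) (sq_nonneg (W x₀))]
  have hftc : ∫ y in x₀..x, 2 * W y * deriv W y = W x ^ 2 - W x₀ ^ 2 := by
    refine intervalIntegral.integral_eq_sub_of_hasDerivAt (f := fun y => W y ^ 2)
      (fun y _ => ?_) (hWW'.intervalIntegrable _ _)
    simpa using (hW.differentiable one_ne_zero y).hasDerivAt.fun_pow 2
  have hcross : ∫ y in a..b, |2 * W y * deriv W y| ≤
      (∫ y in a..b, W y ^ 2) + ∫ y in a..b, deriv W y ^ 2 := by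
    rw [← intervalIntegral.integral_add (Continuous.intervalIntegrable (by fun_prop) _ _)
      (Continuous.intervalIntegrable (by fun_prop) _ _)]
    refine intervalIntegral.integral_mono_on (by linarith) (hWW'.abs.intervalIntegrable _ _)
      (Continuous.intervalIntegrable (by fun_prop) _ _) fun y _ => ?_
    rw [abs_le]
    constructor <;> nlinarith [sq_nonneg (W y + deriv W y), sq_nonneg (W y - deriv W y)]
  have := abs_intervalIntegral_le_of_mem_Icc hWW' hx₀ hx
  rw [hftc, abs_le] at this
  linarith [this.2]

theorem abs_integral_mul_le_of_eq_mul_add {U V g : ℝ → ℝ} {M : ℝ} (hab : a ≤ b)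
    (hW : Continuous W) (hU : Continuous U) (hg : Continuous g) (hV : ∀ x ∈ Icc a b, |V x| ≤ M)
    (heq : ∀ x ∈ Icc a b, U x = V x * W x + g x) :
    |∫ x in a..b, W x * U x| ≤
      (M + 1 / 2) * (∫ x in a..b, W x ^ 2) + (∫ x in a..b, g x ^ 2) / 2 := by
  calc |∫ x in a..b, W x * U x|
      ≤ ∫ x in a..b, |W x * U x| := intervalIntegral.abs_integral_le_integral_abs hab
    _ ≤ ∫ x in a..b, ((M + 1 / 2) * W x ^ 2 + g x ^ 2 / 2) := by
        refine intervalIntegral.integral_mono_on hab ((hW.mul hU).abs.intervalIntegrable _ _)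
          (Continuous.intervalIntegrable (by fun_prop) _ _) fun x hx => ?_
        have hVW : |V x * W x ^ 2| ≤ M * W x ^ 2 := by
          rw [abs_mul, abs_of_nonneg (sq_nonneg (W x))]
          exact mul_le_mul_of_nonneg_right (hV x hx) (sq_nonneg _)
        rw [heq x hx, show W x * (V x * W x + g x) = V x * W x ^ 2 + W x * g x by ring]
        rw [abs_le] at hVW ⊢
        constructor <;> nlinarith [sq_nonneg (W x + g x), sq_nonneg (W x - g x)]
    _ = (M + 1 / 2) * (∫ x in a..b, W x ^ 2) + (∫ x in a..b, g x ^ 2) / 2 := by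
        rw [intervalIntegral.integral_add (Continuous.intervalIntegrable (by fun_prop) _ _)
          (Continuous.intervalIntegrable (by fun_prop) _ _),
          intervalIntegral.integral_const_mul, intervalIntegral.integral_div]

theorem integral_deriv_sq_le_of_deriv_deriv_eq {V g : ℝ → ℝ} {M κ : ℝ} (hW : ContDiff ℝ 2 W)
    (hg : Continuous g) (hab : a + 1 ≤ b) (hV : ∀ x ∈ Icc a b, |V x| ≤ M)
    (heq : ∀ x ∈ Icc a b, deriv (deriv W) x = V x * W x + g x)
    (ha : |deriv W a| ≤ κ) (hb : |deriv W b| ≤ κ) :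
    ∫ x in a..b, deriv W x ^ 2 ≤
      2 * (M + 1) * (∫ x in a..b, W x ^ 2) + 8 * κ ^ 2 + ∫ x in a..b, g x ^ 2 := by
  have hab' : a ≤ b := by linarith
  have hWc : Continuous W := hW.continuous
  have hW''c : Continuous (deriv (deriv W)) :=
    (hW : ContDiff ℝ (1 + 1) W).deriv'.continuous_deriv le_rfl
  set δ := ∫ x in a..b, W x ^ 2
  set E := ∫ x in a..b, deriv W x ^ 2
  set γ := ∫ x in a..b, g x ^ 2
  have hδ : 0 ≤ δ := intervalIntegral.integral_nonneg hab' fun _ _ => sq_nonneg _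
  have hγ : 0 ≤ γ := intervalIntegral.integral_nonneg hab' fun _ _ => sq_nonneg _
  have hM : 0 ≤ M := (abs_nonneg _).trans (hV a (left_mem_Icc.mpr hab'))
  have hbulk := abs_integral_mul_le_of_eq_mul_add hab' hWc hW''c hg hV heq
  -- `|W y W'(y)| ≤ W(y)² / 8 + 2 W'(y)²`, so the boundary terms cost only a quarter of `E`
  have hend : ∀ y ∈ Icc a b, |deriv W y| ≤ κ →
      |W y * deriv W y| ≤ (2 * δ + E) / 8 + 2 * κ ^ 2 := by
    intro y hy hκ
    have htrace := sq_le_two_mul_integral_sq_add_integral_deriv_sq (hW.of_le one_le_two) hab hy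
    rw [abs_mul]
    nlinarith [sq_nonneg (|W y| - 4 * |deriv W y|), sq_abs (W y), abs_nonneg (deriv W y),
      mul_self_le_mul_self (abs_nonneg _) hκ]
  have hibp : E = _ := integral_deriv_sq_eq hW
  have hb' := hend b (right_mem_Icc.mpr hab') hb
  have ha' := hend a (left_mem_Icc.mpr hab') ha
  rw [abs_le] at hbulk hb' ha'
  nlinarith [mul_nonneg hM hδ, sq_nonneg κ]

end EnergyEstimate

theorem Real.hasDerivAt_tanh (x : ℝ) : HasDerivAt tanh (1 / cosh x ^ 2) x := by
  rw [show tanh = sinh / cosh from funext tanh_eq_sinh_div_cosh]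
  refine ((hasDerivAt_sinh x).div (hasDerivAt_cosh x) (cosh_pos x).ne').congr_deriv ?_
  rw [← cosh_sq_sub_sinh_sq x]
  ring

theorem one_div_cosh_sq_le (t : ℝ) : 1 / cosh t ^ 2 ≤ 4 * exp (-2 * |t|) := by
  have h : exp |t| ≤ 2 * cosh t := by rw [cosh_eq]; linarith [exp_abs_le t]
  have h2 : exp (-2 * |t|) * exp |t| ^ 2 = 1 := by
    rw [← exp_nat_mul, ← exp_add]; norm_num
  rw [div_le_iff₀ (pow_pos (cosh_pos t) 2)]
  nlinarith [pow_le_pow_left₀ (exp_pos |t|).le h 2, exp_pos (-2 * |t|)]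

noncomputable def kink (z : ℝ) : ℝ := tanh (√2 * z)

def doubleWell (u : ℝ) : ℝ := (u ^ 2 - 1) ^ 2

theorem deriv_kink : deriv kink = fun z => √2 / cosh (√2 * z) ^ 2 :=
  funext fun z => ((hasDerivAt_tanh (√2 * z)).comp z
    ((hasDerivAt_id z).const_mul √2)).deriv.trans (by simp; ring)

theorem contDiff_deriv_kink {n : WithTop ℕ∞} : ContDiff ℝ n (deriv kink) := by
  rw [deriv_kink]
  exact contDiff_const.div (by fun_prop) fun z => (pow_pos (cosh_pos _) 2).ne'

theorem hasDerivAt_deriv_kink (z : ℝ) :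
    HasDerivAt (deriv kink) (-4 * sinh (√2 * z) / cosh (√2 * z) ^ 3) z := by
  rw [deriv_kink]
  refine ((hasDerivAt_const z √2).div ((((hasDerivAt_id z).const_mul √2).cosh).fun_pow 2)
    (pow_ne_zero 2 (cosh_pos (√2 * z)).ne')).congr_deriv ?_
  have := (cosh_pos (√2 * z)).ne'
  simp only [id, Nat.cast_ofNat]
  field_simp
  norm_num
  ring

theorem abs_deriv_deriv_kink_le (z : ℝ) : |deriv (deriv kink) z| ≤ 16 * exp (-2 * |z|) := by
  set t := √2 * z
  have hc := cosh_pos t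
  have hsinh : |sinh t| ≤ cosh t := by
    rw [← abs_of_pos hc]; exact sq_le_sq.mp (by nlinarith [cosh_sq_sub_sinh_sq t])
  have ht : |z| ≤ |t| := by
    rw [abs_mul, abs_of_pos (sqrt_pos.mpr two_pos)]
    exact le_mul_of_one_le_left (abs_nonneg z) (one_le_sqrt.mpr one_le_two)
  rw [(hasDerivAt_deriv_kink z).deriv]
  calc |-4 * sinh t / cosh t ^ 3| ≤ 4 * (1 / cosh t ^ 2) := by
        rw [abs_div, abs_mul, abs_of_pos (pow_pos hc 3), div_le_iff₀ (pow_pos hc 3)]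
        field_simp
        norm_num
        nlinarith
    _ ≤ 4 * (4 * exp (-2 * |t|)) := by gcongr; exact one_div_cosh_sq_le t
    _ ≤ 16 * exp (-2 * |z|) := by
        rw [← mul_assoc]; norm_num; gcongr

theorem two_mul_exp_neg_four_le_deriv_kink_sq {z : ℝ} (hz : z ∈ Icc (-1) 1) :
    2 * exp (-4) ≤ deriv kink z ^ 2 := by
  have hz2 : z ^ 2 ≤ 1 := by rw [sq_le_one_iff_abs_le_one, abs_le]; exact hz
  have hcosh : cosh (√2 * z) ≤ exp 1 := by
    refine (cosh_le_exp_half_sq _).trans (exp_le_exp.mpr ?_)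
    rw [mul_pow, sq_sqrt zero_le_two]; linarith
  have hcosh4 : cosh (√2 * z) ^ 4 ≤ exp 4 := by
    calc cosh (√2 * z) ^ 4 ≤ exp 1 ^ 4 := pow_le_pow_left₀ (cosh_pos _).le hcosh 4
      _ = exp 4 := by rw [← exp_nat_mul]; norm_num
  rw [deriv_kink, div_pow, ← pow_mul, sq_sqrt zero_le_two, exp_neg, ← div_eq_mul_inv]
  exact div_le_div_of_nonneg_left zero_le_two (pow_pos (cosh_pos _) 4) hcosh4

theorem sq_one_div_sqrt_integral_deriv_kink_sq_le {L : ℝ} (hL : 1 ≤ L) :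
    (1 / √(∫ z in -L..L, deriv kink z ^ 2)) ^ 2 ≤ exp 4 / 4 := by
  have hcont : Continuous fun z => deriv kink z ^ 2 :=
    (contDiff_deriv_kink (n := 0)).continuous.pow 2
  have hN : 4 * exp (-4) ≤ ∫ z in -L..L, deriv kink z ^ 2 :=
    calc 4 * exp (-4) = ∫ _ in (-1 : ℝ)..1, 2 * exp (-4) := by simp; ring
      _ ≤ ∫ z in (-1 : ℝ)..1, deriv kink z ^ 2 :=
          intervalIntegral.integral_mono_on (by norm_num) intervalIntegrable_const
            (hcont.intervalIntegrable _ _) fun z hz => two_mul_exp_neg_four_le_deriv_kink_sq hz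
      _ ≤ ∫ z in -L..L, deriv kink z ^ 2 :=
          intervalIntegral.integral_mono_interval (by linarith) (by norm_num) hL
            (ae_of_all _ fun _ => sq_nonneg _) (hcont.intervalIntegrable _ _)
  have hpos : (0 : ℝ) < 4 * exp (-4) := by positivity
  rw [div_pow, one_pow, sq_sqrt (hpos.le.trans hN), one_div_le (hpos.trans_le hN) (by positivity)]
  simpa [exp_neg, div_eq_mul_inv, mul_comm] using hN

theorem abs_deriv_deriv_doubleWell_kink_le (z : ℝ) : |deriv (deriv doubleWell) (kink z)| ≤ 8 := by
  have h1 : deriv doubleWell = fun u => 4 * u ^ 3 - 4 * u :=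
    funext fun u => (((hasDerivAt_pow 2 u).sub_const 1).fun_pow 2).deriv.trans (by ring)
  have h2 : deriv (deriv doubleWell) (kink z) = 12 * kink z ^ 2 - 4 := by
    rw [h1]
    exact (((hasDerivAt_pow 3 _).const_mul 4).sub ((hasDerivAt_id _).const_mul 4)).deriv.trans
      (by ring)
  have : kink z ^ 2 < 1 := tanh_sq_lt_one _
  rw [h2, abs_le]
  constructor <;> nlinarith [sq_nonneg (kink z)]

theorem integral_deriv_sq_le_of_linearized_eq {q : ℝ → ℝ} {α lam L : ℝ} (hL : 1 ≤ L)
    (hq : ContDiff ℝ 2 q)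
    (heq : ∀ z ∈ Icc (-L) L, -(deriv (deriv (fun y => q y - α * deriv kink y)) z) +
      deriv (deriv doubleWell) (kink z) * (q z - α * deriv kink z) = lam * q z)
    (hbcR : deriv (fun y => q y - α * deriv kink y) L = -α * deriv (deriv kink) L)
    (hbcL : deriv (fun y => q y - α * deriv kink y) (-L) = -α * deriv (deriv kink) (-L))
    (hq1 : ∫ z in -L..L, q z ^ 2 = 1)
    (hα : α = 1 / √(∫ z in -L..L, deriv kink z ^ 2)) :
    ∫ z in -L..L, deriv (fun y => q y - α * deriv kink y) z ^ 2 ≤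
      18 * (∫ z in -L..L, (q z - α * deriv kink z) ^ 2) + 512 * exp 4 * exp (-4 * L) +
        lam ^ 2 := by
  have hboundary : ∀ x, |x| = L → |-α * deriv (deriv kink) x| ≤ |α| * (16 * exp (-2 * L)) :=
    fun x hx => by
      rw [abs_mul, abs_neg, ← hx]
      exact mul_le_mul_of_nonneg_left (abs_deriv_deriv_kink_le x) (abs_nonneg α)
  have key := integral_deriv_sq_le_of_deriv_deriv_eq (g := fun z => -(lam * q z))
    (hq.sub (contDiff_const.mul contDiff_deriv_kink)) (by fun_prop) (by linarith)
    (fun z _ => abs_deriv_deriv_doubleWell_kink_le z) (fun z hz => by linarith [heq z hz])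
    (hbcL ▸ hboundary _ (by rw [abs_neg, abs_of_pos (by linarith)]))
    (hbcR ▸ hboundary _ (abs_of_pos (by linarith)))
  have hα2 : α ^ 2 ≤ exp 4 / 4 := hα ▸ sq_one_div_sqrt_integral_deriv_kink_sq_le hL
  have hexp : exp (-2 * L) ^ 2 = exp (-4 * L) := by rw [← exp_nat_mul]; push_cast; ring_nf
  simp only [neg_sq, mul_pow, intervalIntegral.integral_const_mul, hq1, mul_one, sq_abs,
    hexp] at key
  nlinarith [mul_le_mul_of_nonneg_right hα2 (exp_pos (-4 * L)).le]

theorem exp_neg_div_le_exp_neg_div {s t ε : ℝ} (hε : 0 < ε) (hst : s ≤ t) :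
    exp (-t / ε) ≤ exp (-s / ε) :=
  exp_le_exp.mpr (div_le_div_of_nonneg_right (neg_le_neg hst) hε.le)

theorem stmt_19 (c C : ℝ) (hc : 0 < c) (hC : 0 < C)
    (θ : ℝ → ℝ) (hθ : ∀ z, θ z = Real.tanh (Real.sqrt 2 * z))
    (f : ℝ → ℝ) (hf : ∀ u, f u = (u ^ 2 - 1) ^ 2) :
    ∃ c' > (0 : ℝ), ∃ C' > (0 : ℝ),
      ∀ ε : ℝ, 0 < ε → ε < 1 → ∀ q : ℝ → ℝ, ∀ α lam1 : ℝ,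
        ContDiff ℝ 2 q →
        -- equation for q - αθ' on (-1/ε, 1/ε)
        (∀ z ∈ Icc (-(1 / ε)) (1 / ε),
          -(deriv (deriv (fun y => q y - α * deriv θ y)) z) +
            deriv (deriv f) (θ z) * (q z - α * deriv θ z) = lam1 * q z) →
        -- boundary conditions (q - αθ')'(±1/ε) = -αθ''(±1/ε)
        deriv (fun y => q y - α * deriv θ y) (1 / ε) = -α * deriv (deriv θ) (1 / ε) →
        deriv (fun y => q y - α * deriv θ y) (-(1 / ε)) = -α * deriv (deriv θ) (-(1 / ε)) →
        -- normalization and smallness hypotheses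
        (∫ z in Icc (-(1 / ε)) (1 / ε), (q z) ^ 2) = 1 →
        |lam1| ≤ C * Real.exp (-c / ε) →
        (∫ z in Icc (-(1 / ε)) (1 / ε), (q z - α * deriv θ z) ^ 2) ≤
          C * Real.exp (-c / ε) →
        α = 1 / Real.sqrt (∫ z in Icc (-(1 / ε)) (1 / ε), (deriv θ z) ^ 2) →
        (∫ z in Icc (-(1 / ε)) (1 / ε),
            (deriv (fun y => q y - α * deriv θ y) z) ^ 2) ≤
          C' * Real.exp (-c' / ε) := by
  refine ⟨min c 4, lt_min hc four_pos, 18 * C + 512 * exp 4 + C ^ 2, by positivity, ?_⟩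
  intro ε hε hε1 q α lam1 hq heq hbcR hbcL hq1 hlam hδ hα
  obtain rfl : θ = kink := funext hθ
  obtain rfl : f = doubleWell := funext hf
  have hL : 1 ≤ 1 / ε := by rw [le_div_iff₀ hε]; linarith
  simp only [integral_Icc_eq_integral_Ioc,
    ← intervalIntegral.integral_of_le (by linarith : -(1 / ε) ≤ 1 / ε)] at hq1 hδ hα ⊢
  have key := integral_deriv_sq_le_of_linearized_eq hL hq heq hbcR hbcL hq1 hα
  have hexp : exp (-c / ε) ≤ exp (-min c 4 / ε) := exp_neg_div_le_exp_neg_div hε (min_le_left c 4)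
  have hexp_L : exp (-4 * (1 / ε)) ≤ exp (-min c 4 / ε) := by
    simpa [neg_div, div_eq_mul_inv] using exp_neg_div_le_exp_neg_div hε (min_le_right c 4)
  have hexp_sq : exp (-c / ε) ^ 2 ≤ exp (-min c 4 / ε) := by
    rw [← exp_nat_mul]
    convert exp_neg_div_le_exp_neg_div hε ((min_le_left c 4).trans (by linarith : c ≤ 2 * c))
      using 2
    push_cast; ring
  have hlam2 : lam1 ^ 2 ≤ C ^ 2 * exp (-c / ε) ^ 2 := by
    rw [← mul_pow, ← sq_abs]; exact pow_le_pow_left₀ (abs_nonneg _) hlam 2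
  calc _ ≤ 18 * (C * exp (-c / ε)) + 512 * exp 4 * exp (-4 * (1 / ε)) +
          C ^ 2 * exp (-c / ε) ^ 2 := by linarith
    _ ≤ 18 * (C * exp (-min c 4 / ε)) + 512 * exp 4 * exp (-min c 4 / ε) +
          C ^ 2 * exp (-min c 4 / ε) := by gcongr
    _ = (18 * C + 512 * exp 4 + C ^ 2) * exp (-min c 4 / ε) := by ring
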